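/- Let v, a, b, c, d be points of ℝ³ such that b − v and c − v are linearly independent, and set m = (b − v) × (c − v), n₁ = (a − v) × (b − v), n₃ = (c − v) × (d − v). Assume ⟨a − v, m⟩ · ⟨d − v, m⟩ < 0, i.e., a and d lie strictly on opposite sides of the plane through v, b, c (the middle face is an inflection face). Then the unoriented angle between the orthogonal projections of n₁ and n₃ onto the plane m⊥ equals ∠(b − v, c − v). (Lemma 2.3, cases (ii)/(iv): the spherical angle of the Gauss image of a vertex star at the normal of an inflection face is 2π − α; its unoriented representative equals the angle between the two edges.) -/

import Mathlib

/-!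
Write `p = b - v`, `q = c - v` and `m = p × q`. For `p ⊥ m` the identity
`m × (m × z) = ⟪m, z⟫ m - ‖m‖² z` shows that the projection of `u × p` onto `m⊥` is
`(⟪u, m⟫ / ‖m‖²) (m × p)`; likewise the projection of `q × w` is `(-⟪w, m⟫ / ‖m‖²) (m × q)`.
On an inflection face the two coefficients have the same sign, so the angle in question is the
angle between `m × p` and `m × q`, and `x ↦ m × x` is a similarity of ratio `‖m‖` on `m⊥`.
-/

open RealInnerProductSpace

noncomputable section

/-- Euclidean 3-space. -/
abbrev E3 : Type := EuclideanSpace ℝ (Fin 3)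

/-- The cross product on `E3`. -/
noncomputable def cross3 (a b : E3) : E3 :=
  (WithLp.equiv 2 (Fin 3 → ℝ)).symm
    ![a 1 * b 2 - a 2 * b 1, a 2 * b 0 - a 0 * b 2, a 0 * b 1 - a 1 * b 0]

/-- The orthogonal projection of `z` onto the plane `m⊥`. -/
noncomputable def projPerp (m z : E3) : E3 := z - (⟪z, m⟫ / ⟪m, m⟫) • m

open Matrix

lemma cross3_eq_toLp_crossProduct (a b : E3) :
    cross3 a b = WithLp.toLp 2 (a.ofLp ⨯₃ b.ofLp) :=
  rfl

lemma EuclideanSpace.real_inner_eq_dotProduct {ι : Type*} [Fintype ι]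
    (x y : EuclideanSpace ℝ ι) : ⟪x, y⟫ = x.ofLp ⬝ᵥ y.ofLp := by
  rw [EuclideanSpace.inner_eq_star_dotProduct, star_trivial, dotProduct_comm]

section CrossProduct

open EuclideanSpace

lemma inner_cross3_cross3 (a b c d : E3) :
    ⟪cross3 a b, cross3 c d⟫ = ⟪a, c⟫ * ⟪b, d⟫ - ⟪a, d⟫ * ⟪b, c⟫ := by
  simp only [real_inner_eq_dotProduct, cross3_eq_toLp_crossProduct, cross_dot_cross]

lemma cross3_cross3 (a b c : E3) : cross3 a (cross3 b c) = ⟪a, c⟫ • b - ⟪b, a⟫ • c := by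
  simp only [real_inner_eq_dotProduct, cross3_eq_toLp_crossProduct,
    cross_cross_eq_smul_sub_smul']
  rfl

lemma neg_cross3 (a b : E3) : -cross3 a b = cross3 b a := by
  simp only [cross3_eq_toLp_crossProduct, ← WithLp.toLp_neg, cross_anticomm]

lemma cross3_smul_right (r : ℝ) (a b : E3) : cross3 a (r • b) = r • cross3 a b := by
  simp only [cross3_eq_toLp_crossProduct, WithLp.ofLp_smul, map_smul]
  rfl

lemma inner_self_cross3 (a b : E3) : ⟪a, cross3 a b⟫ = 0 := by
  simp only [real_inner_eq_dotProduct, cross3_eq_toLp_crossProduct, dot_self_cross]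

lemma inner_cross3_self (a b : E3) : ⟪b, cross3 a b⟫ = 0 := by
  simp only [real_inner_eq_dotProduct, cross3_eq_toLp_crossProduct, dot_cross_self]

lemma norm_cross3_of_inner_eq_zero {a b : E3} (h : ⟪a, b⟫ = 0) :
    ‖cross3 a b‖ = ‖a‖ * ‖b‖ := by
  rw [norm_eq_sqrt_real_inner, inner_cross3_cross3, h, real_inner_self_eq_norm_sq,
    real_inner_self_eq_norm_sq, zero_mul, sub_zero, ← mul_pow, Real.sqrt_sq (by positivity)]

end CrossProduct

lemma projPerp_neg (m z : E3) : projPerp m (-z) = -projPerp m z := by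
  simp only [projPerp, inner_neg_left, neg_div, neg_smul, sub_neg_eq_add, neg_sub, neg_add_eq_sub]

lemma projPerp_cross3_right_of_inner_eq_zero {m p : E3} (hm : m ≠ 0) (hpm : ⟪p, m⟫ = 0)
    (u : E3) : projPerp m (cross3 u p) = (⟪u, m⟫ / ⟪m, m⟫) • cross3 m p := by
  have hmup : cross3 m (cross3 u p) = (-⟪u, m⟫) • p := by
    rw [cross3_cross3, real_inner_comm, hpm, zero_smul, zero_sub, real_inner_comm, neg_smul]
  have key : ⟪u, m⟫ • cross3 m p = ⟪m, m⟫ • cross3 u p - ⟪cross3 u p, m⟫ • m := by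
    have := cross3_cross3 m m (cross3 u p)
    rw [hmup, cross3_smul_right, ← real_inner_comm m (cross3 u p)] at this
    rw [← neg_sub, ← this, neg_smul, neg_neg]
  have hmm : ⟪m, m⟫ ≠ 0 := inner_self_ne_zero.mpr hm
  rw [div_eq_inv_mul, mul_smul, key, projPerp]
  match_scalars <;> field_simp

lemma projPerp_cross3_left_of_inner_eq_zero {m p : E3} (hm : m ≠ 0) (hpm : ⟪p, m⟫ = 0)
    (u : E3) : projPerp m (cross3 p u) = (-⟪u, m⟫ / ⟪m, m⟫) • cross3 m p := by
  rw [← neg_cross3, projPerp_neg, projPerp_cross3_right_of_inner_eq_zero hm hpm, neg_div,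
    neg_smul]

lemma angle_cross3_cross3_of_inner_eq_zero {m p q : E3} (hm : m ≠ 0) (hp : ⟪p, m⟫ = 0)
    (hq : ⟪q, m⟫ = 0) :
    InnerProductGeometry.angle (cross3 m p) (cross3 m q) = InnerProductGeometry.angle p q := by
  rw [real_inner_comm] at hp hq
  have hm' : ‖m‖ ^ 2 ≠ 0 := by positivity
  unfold InnerProductGeometry.angle
  rw [inner_cross3_cross3, hq, zero_mul, sub_zero, real_inner_self_eq_norm_sq,
    norm_cross3_of_inner_eq_zero hp, norm_cross3_of_inner_eq_zero hq,
    mul_mul_mul_comm, ← sq, mul_div_mul_left _ _ hm']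

lemma InnerProductGeometry.angle_smul_smul_of_mul_pos {V : Type*} [NormedAddCommGroup V]
    [InnerProductSpace ℝ V] {r s : ℝ} (h : 0 < r * s) (x y : V) :
    angle (r • x) (s • y) = angle x y := by
  rcases pos_and_pos_or_neg_and_neg_of_mul_pos h with ⟨hr, hs⟩ | ⟨hr, hs⟩
  · rw [angle_smul_left_of_pos _ _ hr, angle_smul_right_of_pos _ _ hs]
  · rw [angle_smul_left_of_neg _ _ hr, angle_smul_right_of_neg _ _ hs, angle_neg_neg]

theorem stmt1_general (v a b c d : E3)
    (hside : ⟪a - v, cross3 (b - v) (c - v)⟫ * ⟪d - v, cross3 (b - v) (c - v)⟫ < 0) :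
    InnerProductGeometry.angle
        (projPerp (cross3 (b - v) (c - v)) (cross3 (a - v) (b - v)))
        (projPerp (cross3 (b - v) (c - v)) (cross3 (c - v) (d - v)))
      = InnerProductGeometry.angle (b - v) (c - v) := by
  set p := b - v
  set q := c - v
  set m := cross3 p q
  have hm : m ≠ 0 := by
    rintro hm
    simp [hm] at hside
  have hcoeff : 0 < ⟪a - v, m⟫ / ⟪m, m⟫ * (-⟪d - v, m⟫ / ⟪m, m⟫) := by
    rw [div_mul_div_comm, mul_neg, neg_div]
    exact neg_pos.mpr (div_neg_of_neg_of_pos hside (mul_self_pos.mpr (inner_self_ne_zero.mpr hm)))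
  rw [projPerp_cross3_right_of_inner_eq_zero hm (inner_self_cross3 p q),
    projPerp_cross3_left_of_inner_eq_zero hm (inner_cross3_self p q),
    InnerProductGeometry.angle_smul_smul_of_mul_pos hcoeff,
    angle_cross3_cross3_of_inner_eq_zero hm (inner_self_cross3 p q) (inner_cross3_self p q)]

/-- Lemma 2.3, cases (ii)/(iv): if the middle face of three consecutive faces of a
vertex star *is* an inflection face (`a` and `d` lie strictly on opposite sides
of the plane of the middle face), then the unoriented angle between the projections
of the outer face normals `n₁, n₃` onto the plane orthogonal to the middle face
normal `m` equals `∠(b − v, c − v)`. -/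
theorem stmt1 (v a b c d : E3)
    (hbc : LinearIndependent ℝ ![b - v, c - v])
    (hside : ⟪a - v, cross3 (b - v) (c - v)⟫ * ⟪d - v, cross3 (b - v) (c - v)⟫ < 0) :
    InnerProductGeometry.angle
        (projPerp (cross3 (b - v) (c - v)) (cross3 (a - v) (b - v)))
        (projPerp (cross3 (b - v) (c - v)) (cross3 (c - v) (d - v)))
      = InnerProductGeometry.angle (b - v) (c - v) :=
  stmt1_general v a b c d hside
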